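/- For 0<|q|<1 and nonzero x, y: j(-x;q) j(y;q) + j(x;q) j(-y;q) = 2 j(xy;q^2) j(q x^{-1} y;q^2), where j(x;q) := (x;q)_∞(q/x;q)_∞(q;q)_∞. -/

import Mathlib

noncomputable def qPochInf (x q : ℂ) : ℂ := ∏' i : ℕ, (1 - q ^ i * x)

noncomputable def jt (x q : ℂ) : ℂ := qPochInf x q * qPochInf (q / x) q * qPochInf q q

noncomputable def appellLerch (x q z : ℂ) : ℂ :=
  (jt z q)⁻¹ * ∑' r : ℤ, (-1) ^ r * q ^ (r * (r - 1) / 2) * z ^ r / (1 - q ^ (r - 1) * x * z)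

noncomputable def qPochFin (x q : ℂ) (n : ℕ) : ℂ := ∏ i ∈ Finset.range n, (1 - q ^ i * x)

/-!
By the Jacobi triple product `jt x q = ∑ₘ θₘ(x)`, `θₘ(x) = (-1)^m q^(m(m-1)/2) x^m`, and since
`θₘ(-x) = (-1)^m θₘ(x)`, the left side is the double series
`∑_{m,n} ((-1)^m + (-1)^n) θₘ(x) θₙ(y)`. Its terms with `m + n` odd cancel, and on the remaining
ones the substitution `(m, n) = (s + t, s - t)` turns it, term by term, into twice the product of
the theta series of `x y` and `q x y⁻¹` in base `q²`; finally `jt z w = jt (w / z) w`.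

The triple product itself is the limit `N → ∞` of its finite form
`(x;q)_N (q/x;q)_N = ∑_{|m| ≤ N} [2N, N+m]_q θₘ(x)`, which is the q-binomial theorem applied to
`(x q^(-N); q)_{2N}`; the Gaussian coefficients tend to `1 / (q;q)_∞` and are uniformly bounded,
so dominated convergence applies.
-/

open Filter Finset Topology

lemma qPochFin_zero (x q : ℂ) : qPochFin x q 0 = 1 := prod_range_zero _

lemma qPochFin_succ (x q : ℂ) (n : ℕ) :
    qPochFin x q (n + 1) = qPochFin x q n * (1 - q ^ n * x) :=
  prod_range_succ _ _

lemma qPochFin_succ' (x q : ℂ) (n : ℕ) :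
    qPochFin x q (n + 1) = (1 - x) * qPochFin (q * x) q n := by
  rw [qPochFin, qPochFin, prod_range_succ', pow_zero, one_mul, mul_comm]
  exact congrArg _ (prod_congr rfl fun i _ => by ring)

section Convergence

variable {q : ℂ}

lemma summable_norm_pow_mul (hq : ‖q‖ < 1) (x : ℂ) : Summable fun i : ℕ => ‖q ^ i * x‖ := by
  simpa [norm_mul, norm_pow] using
    (summable_geometric_of_lt_one (norm_nonneg q) hq).mul_right ‖x‖

lemma tendsto_qPochFin (hq : ‖q‖ < 1) (x : ℂ) :
    Tendsto (qPochFin x q) atTop (𝓝 (qPochInf x q)) := by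
  have : Multipliable fun i : ℕ => 1 + -(q ^ i * x) :=
    multipliable_one_add_of_summable (by simpa using summable_norm_pow_mul hq x)
  simp only [← sub_eq_add_neg] at this
  exact this.hasProd.tendsto_prod_nat

lemma one_sub_pow_mul_self_ne_zero (hq : ‖q‖ < 1) (i : ℕ) : 1 - q ^ i * q ≠ 0 := by
  rw [sub_ne_zero, ← pow_succ]
  intro h
  have := congrArg norm h
  rw [norm_one, norm_pow] at this
  exact (pow_lt_one₀ (norm_nonneg q) hq i.succ_ne_zero).ne' this

lemma qPochFin_self_ne_zero (hq : ‖q‖ < 1) (n : ℕ) : qPochFin q q n ≠ 0 :=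
  prod_ne_zero_iff.mpr fun i _ => one_sub_pow_mul_self_ne_zero hq i

lemma qPochInf_self_ne_zero (hq : ‖q‖ < 1) : qPochInf q q ≠ 0 := by
  have := tprod_one_add_ne_zero_of_summable (f := fun i : ℕ => -(q ^ i * q))
    (fun i => by simpa [← sub_eq_add_neg] using one_sub_pow_mul_self_ne_zero hq i)
    (by simpa using summable_norm_pow_mul hq q)
  simpa [qPochInf, ← sub_eq_add_neg] using this

lemma exists_norm_le_of_tendsto {E : Type*} [SeminormedAddCommGroup E] {u : ℕ → E} {a : E}
    (h : Tendsto u atTop (𝓝 a)) :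
    ∃ C, ∀ n, ‖u n‖ ≤ C := by
  obtain ⟨C, hC⟩ := isBounded_iff_forall_norm_le.mp (Metric.isBounded_range_of_tendsto u h)
  exact ⟨C, fun n => hC _ ⟨n, rfl⟩⟩

end Convergence

/-- The Gaussian binomial coefficient `[n, k]_q`, by the q-Pascal rule. -/
def qBinom (q : ℂ) : ℕ → ℕ → ℂ
  | _, 0 => 1
  | 0, _ + 1 => 0
  | n + 1, k + 1 => q ^ (k + 1) * qBinom q n (k + 1) + qBinom q n k

section QBinomial

variable (q : ℂ)

@[simp] lemma qBinom_zero_right (n : ℕ) : qBinom q n 0 = 1 := by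
  cases n <;> rfl

lemma qBinom_succ_succ (n k : ℕ) :
    qBinom q (n + 1) (k + 1) = q ^ (k + 1) * qBinom q n (k + 1) + qBinom q n k := rfl

lemma qBinom_eq_zero_of_lt {n k : ℕ} (h : n < k) : qBinom q n k = 0 := by
  induction n generalizing k with
  | zero => obtain ⟨k, rfl⟩ := Nat.exists_eq_add_one_of_ne_zero h.ne'; rfl
  | succ n ih =>
    obtain ⟨k, rfl⟩ := Nat.exists_eq_add_one_of_ne_zero (by omega : k ≠ 0)
    rw [qBinom_succ_succ, ih (by omega), ih (by omega), mul_zero, add_zero]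

lemma qBinom_mul_qPochFin {n k : ℕ} (h : k ≤ n) :
    qBinom q n k * (qPochFin q q k * qPochFin q q (n - k)) = qPochFin q q n := by
  induction n generalizing k with
  | zero => obtain rfl := Nat.le_zero.mp h; simp [qPochFin_zero]
  | succ n ih =>
    rcases k with _ | k
    · simp [qPochFin_zero]
    rw [qBinom_succ_succ, Nat.add_sub_add_right, qPochFin_succ _ _ k, qPochFin_succ _ _ n]
    rcases (Nat.le_of_lt_succ h).eq_or_lt with rfl | hk
    · have := ih le_rfl
      rw [qBinom_eq_zero_of_lt q (Nat.lt_succ_self k), Nat.sub_self] at *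
      linear_combination (1 - q ^ k * q) * this
    · obtain ⟨j, rfl⟩ := Nat.exists_eq_add_of_lt hk
      have h₁ := ih (k := k + 1) (by omega)
      have h₀ := ih (k := k) (by omega)
      rw [show k + j + 1 - (k + 1) = j by omega, qPochFin_succ] at h₁
      rw [show k + j + 1 - k = j + 1 by omega, qPochFin_succ] at h₀ ⊢
      linear_combination (1 - q ^ j * q) * q ^ (k + 1) * h₁ + (1 - q ^ k * q) * h₀

theorem qPochFin_eq_sum_qBinom (t : ℂ) (n : ℕ) :
    qPochFin t q n = ∑ k ∈ range (n + 1), qBinom q n k * q ^ k.choose 2 * (-t) ^ k := by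
  induction n generalizing t with
  | zero => simp [qPochFin_zero]
  | succ n ih =>
    have choose_succ (k : ℕ) : (k + 1).choose 2 = k.choose 2 + k := by
      simp [Nat.choose_succ_succ, add_comm]
    set a : ℕ → ℂ := fun k => qBinom q n k * q ^ (k + 1).choose 2 * (-t) ^ k
    have hprod : qPochFin t q (n + 1) =
        ∑ k ∈ range (n + 1), a k + ∑ k ∈ range (n + 1), a k * (-t) := by
      rw [qPochFin_succ', ih, mul_sum, ← sum_add_distrib]
      refine sum_congr rfl fun k _ => ?_
      simp only [a, choose_succ]
      ring
    have hshift : ∑ k ∈ range (n + 1), a k = ∑ k ∈ range (n + 1), a (k + 1) + 1 := by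
      have hlast : a (n + 1) = 0 := by simp [a, qBinom_eq_zero_of_lt q n.lt_succ_self]
      rw [← add_zero (∑ k ∈ range (n + 1), a k), ← hlast, ← sum_range_succ, sum_range_succ']
      simp [a]
    rw [hprod, hshift, sum_range_succ' _ (n + 1)]
    simp only [qBinom_succ_succ, add_mul, sum_add_distrib, qBinom_zero_right, pow_zero, mul_one,
      Nat.choose_zero_succ]
    rw [add_right_comm]
    congr 2 <;> refine sum_congr rfl fun k _ => ?_
    · simp only [a, choose_succ (k + 1)]
      ring
    · simp only [a]
      ring

end QBinomial

noncomputable def thetaTerm (q x : ℂ) (m : ℤ) : ℂ := (-1) ^ m * q ^ (m * (m - 1) / 2) * x ^ m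

lemma two_mul_triangle (m : ℤ) : 2 * (m * (m - 1) / 2) = m * (m - 1) :=
  Int.two_mul_ediv_two_of_even (Int.even_mul_pred_self m)

lemma triangle_add (a b : ℤ) :
    (a + b) * (a + b - 1) / 2 = a * (a - 1) / 2 + b * (b - 1) / 2 + a * b := by
  have := two_mul_triangle a
  have := two_mul_triangle b
  have := two_mul_triangle (a + b)
  have : (a + b) * (a + b - 1) = a * (a - 1) + b * (b - 1) + 2 * (a * b) := by ring
  omega

lemma triangle_natCast (k : ℕ) : (k : ℤ) * (k - 1) / 2 = k.choose 2 := by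
  induction k with
  | zero => rfl
  | succ k ih => push_cast; rw [triangle_add, ih, Nat.choose_succ_succ]; simp [add_comm]

lemma triangle_neg (m : ℤ) : -m * (-m - 1) / 2 = m * (m - 1) / 2 + m := by
  have := two_mul_triangle m
  have := two_mul_triangle (-m)
  have : -m * (-m - 1) = m * (m - 1) + 2 * m := by ring
  omega

section ThetaTerm

variable {q : ℂ}

@[simp] lemma thetaTerm_zero (q x : ℂ) : thetaTerm q x 0 = 1 := by simp [thetaTerm]

@[simp] lemma thetaTerm_one (q x : ℂ) : thetaTerm q x 1 = -x := by simp [thetaTerm]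

lemma thetaTerm_natCast (q t : ℂ) (k : ℕ) : thetaTerm q t k = q ^ k.choose 2 * (-t) ^ k := by
  rw [thetaTerm, triangle_natCast, zpow_natCast, zpow_natCast, zpow_natCast, neg_pow t]
  ring

lemma thetaTerm_neg (q x : ℂ) (m : ℤ) : thetaTerm q (-x) m = (-1) ^ m * thetaTerm q x m := by
  rw [thetaTerm, thetaTerm, neg_eq_neg_one_mul x, mul_zpow]
  ring

lemma thetaTerm_add (hq : q ≠ 0) {x : ℂ} (hx : x ≠ 0) (a b : ℤ) :
    thetaTerm q x (a + b) = thetaTerm q x a * thetaTerm q (q ^ a * x) b := by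
  simp only [thetaTerm, triangle_add, zpow_add₀ hq, zpow_add₀ (by norm_num : (-1 : ℂ) ≠ 0),
    zpow_add₀ hx, mul_zpow, ← zpow_mul]
  ring

lemma thetaTerm_neg_index (hq : q ≠ 0) (x : ℂ) (m : ℤ) :
    thetaTerm q x (-m) = thetaTerm q (q / x) m := by
  rw [thetaTerm, thetaTerm, triangle_neg, zpow_add₀ hq, zpow_neg, zpow_neg, div_eq_mul_inv,
    mul_zpow, inv_zpow, ← inv_zpow, inv_neg_one]
  ring

lemma thetaTerm_ne_zero (hq : q ≠ 0) {x : ℂ} (hx : x ≠ 0) (m : ℤ) : thetaTerm q x m ≠ 0 :=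
  mul_ne_zero (mul_ne_zero (zpow_ne_zero _ (by norm_num)) (zpow_ne_zero _ hq)) (zpow_ne_zero _ hx)

lemma summable_norm_of_succ_eq_mul {K : Type*} [NormedDivisionRing K] {f g : ℕ → K}
    (hf : ∀ n, f n ≠ 0)
    (hfg : ∀ n, f (n + 1) = g n * f n) (hg : Tendsto g atTop (𝓝 0)) :
    Summable fun n => ‖f n‖ := by
  refine summable_of_ratio_test_tendsto_lt_one zero_lt_one
    (.of_forall fun n => norm_ne_zero_iff.mpr (hf n)) ?_
  simpa [hfg, mul_div_assoc, hf] using hg.norm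

lemma summable_norm_thetaTerm_natCast (hq : ‖q‖ < 1) (hq0 : q ≠ 0) {x : ℂ} (hx : x ≠ 0) :
    Summable fun n : ℕ => ‖thetaTerm q x n‖ := by
  refine summable_norm_of_succ_eq_mul (g := fun n => -(q ^ n * x))
    (fun n => thetaTerm_ne_zero hq0 hx n) (fun n => ?_) ?_
  · rw [Nat.cast_succ, thetaTerm_add hq0 hx, mul_comm]
    simp [thetaTerm]
  · simpa using (tendsto_pow_atTop_nhds_zero_of_norm_lt_one hq).mul_const x |>.neg

lemma summable_norm_thetaTerm (hq : ‖q‖ < 1) (hq0 : q ≠ 0) {x : ℂ} (hx : x ≠ 0) :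
    Summable fun m : ℤ => ‖thetaTerm q x m‖ := by
  refine .of_nat_of_neg (summable_norm_thetaTerm_natCast hq hq0 hx) ?_
  simpa only [thetaTerm_neg_index hq0] using
    summable_norm_thetaTerm_natCast hq hq0 (div_ne_zero hq0 hx)

end ThetaTerm

section TripleProduct

variable {q : ℂ}

lemma thetaTerm_neg_natCast_mul_qPochFin (hq : q ≠ 0) {x : ℂ} (hx : x ≠ 0) (N : ℕ) :
    thetaTerm q x (-N) * qPochFin ((q ^ N)⁻¹ * x) q (2 * N) =
      qPochFin x q N * qPochFin (q / x) q N := by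
  induction N with
  | zero => simp [qPochFin_zero]
  | succ N ih =>
    have key : qPochFin x q N * qPochFin (q / x) q N = thetaTerm q x (-(N + 1 : ℕ)) *
        -((q ^ (N + 1))⁻¹ * x) * qPochFin ((q ^ N)⁻¹ * x) q (2 * N) := by
      rw [← ih, show (-N : ℤ) = -(N + 1 : ℕ) + 1 by push_cast; ring, thetaTerm_add hq hx,
        thetaTerm_one, zpow_neg, zpow_natCast]
    rw [show 2 * (N + 1) = 2 * N + 1 + 1 by ring, qPochFin_succ', qPochFin_succ,
      show q * ((q ^ (N + 1))⁻¹ * x) = (q ^ N)⁻¹ * x by field_simp; ring, qPochFin_succ,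
      qPochFin_succ, mul_mul_mul_comm, key]
    field_simp
    ring

theorem qPochFin_mul_qPochFin_eq_sum (hq : q ≠ 0) {x : ℂ} (hx : x ≠ 0) (N : ℕ) :
    qPochFin x q N * qPochFin (q / x) q N =
      ∑ k ∈ range (2 * N + 1), qBinom q (2 * N) k * thetaTerm q x (k - N) := by
  rw [← thetaTerm_neg_natCast_mul_qPochFin hq hx, qPochFin_eq_sum_qBinom, mul_sum]
  refine sum_congr rfl fun k _ => ?_
  rw [sub_eq_neg_add, thetaTerm_add hq hx, zpow_neg, zpow_natCast, thetaTerm_natCast]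
  ring

/-- The terms of `qPochFin_mul_qPochFin_eq_sum`, reindexed by `m = k - N` and extended by zero;
for `m > N` it is the factor `qBinom` that vanishes. -/
noncomputable def finiteThetaTerm (q x : ℂ) (N : ℕ) (m : ℤ) : ℂ :=
  if -(N : ℤ) ≤ m then qBinom q (2 * N) (m + N).toNat * thetaTerm q x m else 0

lemma tsum_finiteThetaTerm (hq : q ≠ 0) {x : ℂ} (hx : x ≠ 0) (N : ℕ) :
    ∑' m, finiteThetaTerm q x N m = qPochFin x q N * qPochFin (q / x) q N := by
  have hsupp :
      Function.support (finiteThetaTerm q x N) ⊆ Set.range fun k : ℕ => (k : ℤ) - N := by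
    intro m hm
    by_cases h : -(N : ℤ) ≤ m
    · exact ⟨(m + N).toNat, by simp only; omega⟩
    · simp [finiteThetaTerm, h] at hm
  have hinj : Function.Injective fun k : ℕ => (k : ℤ) - N := fun a b h => by simpa using h
  rw [← hinj.tsum_eq hsupp,
    qPochFin_mul_qPochFin_eq_sum hq hx, tsum_eq_sum (s := range (2 * N + 1))]
  · refine sum_congr rfl fun k _ => ?_
    simp [finiteThetaTerm]
  · intro k hk
    simp only [finiteThetaTerm, sub_add_cancel, Int.toNat_natCast, neg_le_sub_iff_le_add,
      le_add_iff_nonneg_left, Nat.cast_nonneg, if_true]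
    rw [qBinom_eq_zero_of_lt q (by simpa using hk), zero_mul]

lemma qBinom_eq_div (hq : ‖q‖ < 1) {n k : ℕ} (h : k ≤ n) :
    qBinom q n k = qPochFin q q n / (qPochFin q q k * qPochFin q q (n - k)) :=
  eq_div_of_mul_eq (mul_ne_zero (qPochFin_self_ne_zero hq k) (qPochFin_self_ne_zero hq (n - k)))
    (qBinom_mul_qPochFin q h)

lemma exists_norm_qBinom_le (hq : ‖q‖ < 1) : ∃ B, ∀ n k, ‖qBinom q n k‖ ≤ B := by
  have hlim := tendsto_qPochFin hq q
  obtain ⟨C, hC⟩ := exists_norm_le_of_tendsto hlim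
  obtain ⟨D, hD⟩ := exists_norm_le_of_tendsto (hlim.inv₀ (qPochInf_self_ne_zero hq))
  have hC0 : 0 ≤ C := (norm_nonneg _).trans (hC 0)
  have hD0 : 0 ≤ D := (norm_nonneg _).trans (hD 0)
  refine ⟨C * D * D, fun n k => ?_⟩
  rcases le_or_gt k n with h | h
  · rw [qBinom_eq_div hq h, div_eq_mul_inv, mul_inv, ← mul_assoc, norm_mul, norm_mul]
    exact mul_le_mul (mul_le_mul (hC n) (hD k) (norm_nonneg _) hC0) (hD _) (norm_nonneg _)
      (mul_nonneg hC0 hD0)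
  · rw [qBinom_eq_zero_of_lt q h, norm_zero]
    positivity

lemma tendsto_qBinom_central (hq : ‖q‖ < 1) (m : ℤ) :
    Tendsto (fun N : ℕ => qBinom q (2 * N) (m + N).toNat) atTop (𝓝 (qPochInf q q)⁻¹) := by
  have hlim := tendsto_qPochFin hq q
  have hne := qPochInf_self_ne_zero hq
  have h₁ : Tendsto (fun N : ℕ => 2 * N) atTop atTop :=
    tendsto_atTop_atTop.mpr fun b => ⟨b, fun a ha => by omega⟩
  have h₂ : Tendsto (fun N : ℕ => (m + N).toNat) atTop atTop :=
    tendsto_atTop_atTop.mpr fun b => ⟨b + m.natAbs, fun a ha => by omega⟩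
  have h₃ : Tendsto (fun N : ℕ => 2 * N - (m + N).toNat) atTop atTop :=
    tendsto_atTop_atTop.mpr fun b => ⟨b + 2 * m.natAbs, fun a ha => by omega⟩
  have := (hlim.comp h₁).div ((hlim.comp h₂).mul (hlim.comp h₃)) (mul_ne_zero hne hne)
  rw [div_mul_cancel_left₀ hne] at this
  refine this.congr' ?_
  filter_upwards [eventually_ge_atTop m.natAbs] with N hN
  exact (qBinom_eq_div hq (by beta_reduce; omega)).symm

theorem hasSum_thetaTerm (hq : ‖q‖ < 1) (hq0 : q ≠ 0) {x : ℂ} (hx : x ≠ 0) :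
    HasSum (thetaTerm q x) (jt x q) := by
  obtain ⟨B, hB⟩ := exists_norm_qBinom_le hq
  have hsum := summable_norm_thetaTerm hq hq0 hx
  have hterm (m : ℤ) : Tendsto (fun N => finiteThetaTerm q x N m) atTop
      (𝓝 ((qPochInf q q)⁻¹ * thetaTerm q x m)) := by
    refine ((tendsto_qBinom_central hq m).mul_const _).congr' ?_
    filter_upwards [eventually_ge_atTop m.natAbs] with N hN
    rw [finiteThetaTerm, if_pos (by omega)]
  have hbound : ∀ᶠ N in atTop, ∀ m, ‖finiteThetaTerm q x N m‖ ≤ B * ‖thetaTerm q x m‖ :=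
    .of_forall fun N m => by
      unfold finiteThetaTerm
      split_ifs
      · rw [norm_mul]
        exact mul_le_mul_of_nonneg_right (hB _ _) (norm_nonneg _)
      · simpa using mul_nonneg ((norm_nonneg _).trans (hB 0 0)) (norm_nonneg (thetaTerm q x m))
  have hdom := tendsto_tsum_of_dominated_convergence (hsum.mul_left B) hterm hbound
  simp only [tsum_finiteThetaTerm hq0 hx, tsum_mul_left] at hdom
  have hprod := (tendsto_qPochFin hq x).mul (tendsto_qPochFin hq (q / x))
  rw [jt, tendsto_nhds_unique hprod hdom, mul_right_comm,
    inv_mul_cancel₀ (qPochInf_self_ne_zero hq), one_mul]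
  exact (Summable.of_norm hsum).hasSum

end TripleProduct

section SumExpansion

variable {q : ℂ}

lemma hasSum_thetaTerm_mul_thetaTerm (hq : ‖q‖ < 1) (hq0 : q ≠ 0) {x y : ℂ} (hx : x ≠ 0)
    (hy : y ≠ 0) :
    HasSum (fun p : ℤ × ℤ => thetaTerm q x p.1 * thetaTerm q y p.2) (jt x q * jt y q) :=
  (hasSum_thetaTerm hq hq0 hx).mul (hasSum_thetaTerm hq hq0 hy)
    (summable_mul_of_summable_norm (summable_norm_thetaTerm hq hq0 hx)
      (summable_norm_thetaTerm hq hq0 hy))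

lemma jt_div_left (z : ℂ) {w : ℂ} (hw : w ≠ 0) : jt (w / z) w = jt z w := by
  rw [jt, jt, div_div_cancel₀ hw]
  ring

lemma neg_one_zpow_sub (s t : ℤ) : (-1 : ℂ) ^ (s - t) = (-1) ^ s * (-1) ^ t := by
  rw [zpow_sub₀ (by norm_num), div_eq_mul_inv, ← inv_zpow, inv_neg_one]

lemma thetaTerm_sign_sum_eq_zero (q x y : ℂ) {m n : ℤ} (h : Odd (m + n)) :
    thetaTerm q (-x) m * thetaTerm q y n + thetaTerm q x m * thetaTerm q (-y) n = 0 := by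
  rw [thetaTerm_neg, thetaTerm_neg, show m = (m + n) - n by ring, neg_one_zpow_sub,
    h.neg_one_zpow]
  ring

lemma thetaTerm_sign_sum_add_sub (hq : q ≠ 0) {x y : ℂ} (hx : x ≠ 0) (hy : y ≠ 0) (s t : ℤ) :
    thetaTerm q (-x) (s + t) * thetaTerm q y (s - t) +
        thetaTerm q x (s + t) * thetaTerm q (-y) (s - t) =
      2 * (thetaTerm (q ^ 2) (x * y) s * thetaTerm (q ^ 2) (q * x * y⁻¹) t) := by
  have hsq (m : ℤ) : ((-1 : ℂ) ^ m) ^ 2 = 1 := by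
    rw [sq, ← mul_zpow]
    norm_num
  rw [thetaTerm_neg, thetaTerm_neg]
  simp only [thetaTerm, sub_eq_add_neg s t, triangle_add, triangle_neg, zpow_add₀ hq,
    zpow_add₀ hx, zpow_add₀ hy, zpow_add₀ (by norm_num : (-1 : ℂ) ≠ 0), sq, mul_zpow, mul_neg,
    zpow_neg, inv_zpow']
  field_simp
  rw [hsq, hsq]
  norm_num

lemma hasSum_jt_neg_mul_add_mul_jt_neg (hq : ‖q‖ < 1) (hq0 : q ≠ 0) {x y : ℂ} (hx : x ≠ 0)
    (hy : y ≠ 0) :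
    HasSum (fun p : ℤ × ℤ => 2 * (thetaTerm (q ^ 2) (x * y) p.1 *
        thetaTerm (q ^ 2) (q * x * y⁻¹) p.2))
      (jt (-x) q * jt y q + jt x q * jt (-y) q) := by
  have hsum := (hasSum_thetaTerm_mul_thetaTerm hq hq0 (neg_ne_zero.mpr hx) hy).add
    (hasSum_thetaTerm_mul_thetaTerm hq hq0 hx (neg_ne_zero.mpr hy))
  have hinj : Function.Injective fun p : ℤ × ℤ => (p.1 + p.2, p.1 - p.2) := by
    intro p p' h
    simp only [Prod.mk.injEq] at h
    ext <;> omega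
  rw [← hinj.hasSum_iff] at hsum
  · exact hsum.congr_fun fun p => (thetaTerm_sign_sum_add_sub hq0 hx hy p.1 p.2).symm
  · rintro ⟨m, n⟩ hmn
    refine thetaTerm_sign_sum_eq_zero q x y
      (Int.not_even_iff_odd.mp fun ⟨k, hk⟩ => hmn ⟨(k, m - k), ?_⟩)
    simp only [Prod.mk.injEq]
    omega

end SumExpansion

theorem jt_sum_expansion (q x y : ℂ) (hq0 : 0 < ‖q‖)
    (hq1 : ‖q‖ < 1) (hx : x ≠ 0) (hy : y ≠ 0) :
    jt (-x) q * jt y q + jt x q * jt (-y) q =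
      2 * jt (x * y) (q ^ 2) * jt (q * x⁻¹ * y) (q ^ 2) := by
  have hq : q ≠ 0 := norm_pos_iff.mp hq0
  have hq2 : ‖q ^ 2‖ < 1 := by
    rw [norm_pow]
    exact pow_lt_one₀ hq0.le hq1 two_ne_zero
  have hz : q * x * y⁻¹ ≠ 0 := by simp [hq, hx, hy]
  have hsymm : jt (q * x⁻¹ * y) (q ^ 2) = jt (q * x * y⁻¹) (q ^ 2) := by
    rw [← jt_div_left _ (pow_ne_zero 2 hq)]
    congr 1
    field_simp
  rw [mul_assoc, hsymm]
  exact (hasSum_jt_neg_mul_add_mul_jt_neg hq1 hq hx hy).unique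
    ((hasSum_thetaTerm_mul_thetaTerm hq2 (pow_ne_zero 2 hq) (mul_ne_zero hx hy) hz).mul_left 2)
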